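/- Let n ≥ 1 be an integer, γ ∈ (0,1), and s = n/2 + γ. A function U ∈ C²(ℝⁿ × (0,∞)) satisfies the degenerate elliptic equation div(y^{1−2γ}∇U) = 0, i.e. y^{1−2γ}(Δ_x U(x,y) + ∂²_y U(x,y)) + (1−2γ) y^{−2γ} ∂_y U(x,y) = 0 on ℝⁿ × (0,∞), if and only if the function u(x,y) := y^{n−s} U(x,y) satisfies the scattering equation −Δ_{g⁺}u − s(n−s)u = 0, i.e. y²(Δ_x u(x,y) + ∂²_y u(x,y)) − (n−1) y ∂_y u(x,y) + s(n−s) u(x,y) = 0 on ℝⁿ × (0,∞). -/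

import Mathlib

/-! Multiplying by `y ^ (n - s)` conjugates the scattering operator `Δ_{g⁺} + s(n-s)` into
`y ^ (n - s + 1)` times `y (Δ_x + ∂²_y) + (n + 1 - 2s) ∂_y`, and `n + 1 - 2s = 1 - 2γ`, so this
is `y ^ (2γ)` times `div(y^{1-2γ}∇·)`. Both equations thus say, up to a positive power of `y`,
that the same expression vanishes. -/

open Real Topology

noncomputable def lapX {n : ℕ} (u : EuclideanSpace ℝ (Fin n) → ℝ → ℝ)
    (x : EuclideanSpace ℝ (Fin n)) (y : ℝ) : ℝ :=
  ∑ i : Fin n, iteratedDeriv 2 (fun t : ℝ => u (x + t • EuclideanSpace.single i (1:ℝ)) y) 0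

noncomputable def hypLap (n : ℕ) (u : EuclideanSpace ℝ (Fin n) → ℝ → ℝ)
    (x : EuclideanSpace ℝ (Fin n)) (y : ℝ) : ℝ :=
  y ^ 2 * (lapX u x y + iteratedDeriv 2 (u x) y) - ((n : ℝ) - 1) * y * deriv (u x) y

lemma iteratedDeriv_two_rpow_mul {f : ℝ → ℝ} {y : ℝ} (hy : y ≠ 0) (hf : ContDiffAt ℝ 2 f y)
    (a : ℝ) :
    iteratedDeriv 2 (fun t => t ^ a * f t) y =
      a * (a - 1) * y ^ (a - 2) * f y + 2 * a * y ^ (a - 1) * deriv f y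
        + y ^ a * iteratedDeriv 2 f y := by
  rw [iteratedDeriv_fun_mul (contDiffAt_rpow_const_of_ne hy) hf]
  simp only [Finset.sum_range_succ, Finset.sum_range_zero, iteratedDeriv_eq_iterate,
    iter_deriv_rpow_const, descPochhammer_succ_right, descPochhammer_zero, Polynomial.eval_mul,
    Polynomial.eval_sub, Polynomial.eval_X, Polynomial.eval_one,
    Function.iterate_succ, Function.iterate_zero, Function.comp_apply, id_eq,
    Nat.choose_zero_right, Nat.choose_one_right, Nat.choose_self, Nat.sub_self,
    Nat.cast_zero, Nat.cast_one, Nat.cast_ofNat, sub_zero]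
  ring

lemma contDiffAt_slice {n : ℕ} {U : EuclideanSpace ℝ (Fin n) → ℝ → ℝ}
    (hU : ContDiffOn ℝ 2 (fun p : EuclideanSpace ℝ (Fin n) × ℝ => U p.1 p.2)
      {p : EuclideanSpace ℝ (Fin n) × ℝ | 0 < p.2})
    (x : EuclideanSpace ℝ (Fin n)) {y : ℝ} (hy : 0 < y) : ContDiffAt ℝ 2 (U x) y :=
  (hU.contDiffAt ((isOpen_lt continuous_const continuous_snd).mem_nhds hy)).comp y
    (contDiffAt_const.prodMk contDiffAt_id)

lemma lapX_mul_left {n : ℕ} (c : ℝ → ℝ) (U : EuclideanSpace ℝ (Fin n) → ℝ → ℝ)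
    (x : EuclideanSpace ℝ (Fin n)) (y : ℝ) :
    lapX (fun x' y' => c y' * U x' y') x y = c y * lapX U x y := by
  simp only [lapX, iteratedDeriv_const_mul_field, Finset.mul_sum]

lemma hypLap_rpow_mul_add {n : ℕ} {U : EuclideanSpace ℝ (Fin n) → ℝ → ℝ}
    {x : EuclideanSpace ℝ (Fin n)} {y : ℝ} (hy : 0 < y) (hU : ContDiffAt ℝ 2 (U x) y) (s : ℝ) :
    hypLap n (fun x' y' => y' ^ ((n : ℝ) - s) * U x' y') x y
        + s * ((n : ℝ) - s) * (y ^ ((n : ℝ) - s) * U x y)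
      = y ^ ((n : ℝ) - s) * y * (y * (lapX U x y + iteratedDeriv 2 (U x) y)
          + ((n : ℝ) + 1 - 2 * s) * deriv (U x) y) := by
  have hderiv : deriv (fun t => t ^ ((n : ℝ) - s) * U x t) y
      = ((n : ℝ) - s) * y ^ ((n : ℝ) - s - 1) * U x y + y ^ ((n : ℝ) - s) * deriv (U x) y :=
    ((Real.hasDerivAt_rpow_const (Or.inl hy.ne')).mul
      (hU.differentiableAt two_ne_zero).hasDerivAt).deriv
  rw [hypLap, lapX_mul_left, iteratedDeriv_two_rpow_mul hy.ne' hU, hderiv,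
    Real.rpow_sub hy _ 2, Real.rpow_sub_one hy.ne', Real.rpow_two]
  field_simp
  ring

lemma rpow_one_sub_mul_add {y : ℝ} (hy : 0 < y) (c A B : ℝ) :
    y ^ (1 - c) * A + (1 - c) * y ^ (-c) * B = y ^ (-c) * (y * A + (1 - c) * B) := by
  rw [sub_eq_neg_add, Real.rpow_add_one hy.ne']
  ring

theorem degenerate_extension_iff_scattering_general
    (n : ℕ) (γ : ℝ)
    (s : ℝ) (hs : s = (n : ℝ) / 2 + γ)
    (U : EuclideanSpace ℝ (Fin n) → ℝ → ℝ)
    (hU : ContDiffOn ℝ 2 (fun p : EuclideanSpace ℝ (Fin n) × ℝ => U p.1 p.2)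
      {p : EuclideanSpace ℝ (Fin n) × ℝ | 0 < p.2}) :
    (∀ x : EuclideanSpace ℝ (Fin n), ∀ y : ℝ, 0 < y →
      y ^ (1 - 2*γ) * (lapX U x y + iteratedDeriv 2 (U x) y)
        + (1 - 2*γ) * y ^ (-(2*γ)) * deriv (U x) y = 0)
    ↔ (∀ x : EuclideanSpace ℝ (Fin n), ∀ y : ℝ, 0 < y →
      hypLap n (fun x' y' => y' ^ ((n : ℝ) - s) * U x' y') x y
        + s * ((n : ℝ) - s) * (y ^ ((n : ℝ) - s) * U x y) = 0) := by
  have hcoeff : (n : ℝ) + 1 - 2 * s = 1 - 2 * γ := by rw [hs]; ring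
  refine forall_congr' fun x => forall_congr' fun y => forall_congr' fun hy => ?_
  rw [rpow_one_sub_mul_add hy, hypLap_rpow_mul_add hy (contDiffAt_slice hU x hy), hcoeff,
    mul_eq_zero_iff_left (Real.rpow_pos_of_pos hy _).ne',
    mul_eq_zero_iff_left (mul_pos (Real.rpow_pos_of_pos hy _) hy).ne']

/-- `U` solves `div(y^{1-2γ} ∇U) = 0` on the upper half space iff
`u = y^{n-s} U` solves the scattering equation `-Δ_{g⁺} u - s(n-s) u = 0`. -/
theorem degenerate_extension_iff_scattering
    (n : ℕ) (hn : 1 ≤ n) (γ : ℝ) (hγ : γ ∈ Set.Ioo (0:ℝ) 1)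
    (s : ℝ) (hs : s = (n : ℝ) / 2 + γ)
    (U : EuclideanSpace ℝ (Fin n) → ℝ → ℝ)
    (hU : ContDiffOn ℝ 2 (fun p : EuclideanSpace ℝ (Fin n) × ℝ => U p.1 p.2)
      {p : EuclideanSpace ℝ (Fin n) × ℝ | 0 < p.2}) :
    (∀ x : EuclideanSpace ℝ (Fin n), ∀ y : ℝ, 0 < y →
      y ^ (1 - 2*γ) * (lapX U x y + iteratedDeriv 2 (U x) y)
        + (1 - 2*γ) * y ^ (-(2*γ)) * deriv (U x) y = 0)
    ↔ (∀ x : EuclideanSpace ℝ (Fin n), ∀ y : ℝ, 0 < y →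
      hypLap n (fun x' y' => y' ^ ((n : ℝ) - s) * U x' y') x y
        + s * ((n : ℝ) - s) * (y ^ ((n : ℝ) - s) * U x y) = 0) :=
  degenerate_extension_iff_scattering_general n γ s hs U hU
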